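/- arXiv:2603.18268 — 5 statements merged into one kernel-verified Lean document; each statement's English description precedes it below -/
import Mathlib

section
/- Let $B_1, B_2 \subseteq \mathbb{R}^n$ be convex sets, $v \in \mathbb{R}^n$, and $T : \mathbb{R}^n \to \mathbb{R}^n$ a linear map. If $B_1 \subseteq \mathrm{conv}(B_2 \cup \{v\})$, $v \notin B_1$, and $T(v) \in T(B_1)$, then $T(\mathrm{conv}(B_2 \cup \{v\})) = T(B_2)$. -/
/-!
If `b ∈ B₁` has `T b = T v` and `b ≠ v`, write `b` as a point of a segment `[w, v]` with `w ∈ B₂`.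
Since `b ≠ v`, the weight of `w` is nonzero, so `T` collapses the whole segment and `T w = T v`.
Hence `T v ∈ T '' B₂`, and then `T '' conv (B₂ ∪ {v}) = conv (T '' B₂ ∪ {T v}) = conv (T '' B₂) = T '' B₂`.
-/

open Set

theorem LinearMap.image_convexHull_insert_of_map_mem_image {𝕜 E F : Type*} [Semiring 𝕜]
    [PartialOrder 𝕜] [IsOrderedRing 𝕜] [AddCommMonoid E] [Module 𝕜 E] [AddCommMonoid F]
    [Module 𝕜 F] (f : E →ₗ[𝕜] F) {s : Set E} {v : E} (hs : Convex 𝕜 s) (hv : f v ∈ f '' s) :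
    f '' convexHull 𝕜 (insert v s) = f '' s := by
  rw [f.image_convexHull, image_insert_eq, insert_eq_of_mem hv, (hs.linear_image f).convexHull_eq]

variable {𝕜 E F : Type*} [Field 𝕜] [LinearOrder 𝕜] [IsStrictOrderedRing 𝕜]
  [AddCommGroup E] [Module 𝕜 E] [AddCommGroup F] [Module 𝕜 F]

theorem LinearMap.map_eq_of_mem_segment_of_map_eq (f : E →ₗ[𝕜] F) {x y z : E}
    (hz : z ∈ segment 𝕜 x y) (hzy : z ≠ y) (hf : f z = f y) : f x = f y := by
  obtain ⟨a, b, -, -, hab, rfl⟩ := hz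
  have ha : a ≠ 0 := by
    rintro rfl
    obtain rfl : b = 1 := by simpa using hab
    simp at hzy
  obtain rfl : b = 1 - a := by linear_combination hab
  have : a • f x = a • f y := by
    rw [map_add, map_smul, map_smul] at hf
    linear_combination (norm := module) hf
  exact smul_right_injective F ha this

theorem LinearMap.map_mem_image_of_mem_convexHull_insert (f : E →ₗ[𝕜] F) {s : Set E} {v z : E}
    (hs : Convex 𝕜 s) (hz : z ∈ convexHull 𝕜 (insert v s)) (hzv : z ≠ v) (hf : f z = f v) :
    f v ∈ f '' s := by
  rcases s.eq_empty_or_nonempty with rfl | hne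
  · rw [insert_empty_eq, convexHull_singleton] at hz
    exact absurd hz hzv
  rw [convexHull_insert hne, hs.convexHull_eq, mem_convexJoin] at hz
  obtain ⟨u, hu, w, hw, hzw⟩ := hz
  rw [mem_singleton_iff.mp hu, segment_symm] at hzw
  exact ⟨w, hw, f.map_eq_of_mem_segment_of_map_eq hzw hzv hf⟩

theorem stmt_2_general {n : ℕ} (B₁ B₂ : Set (Fin n → ℝ)) (v : Fin n → ℝ)
    (T : (Fin n → ℝ) →ₗ[ℝ] (Fin n → ℝ))
    (hB₂ : Convex ℝ B₂)
    (h1 : B₁ ⊆ convexHull ℝ (B₂ ∪ {v})) (h2 : v ∉ B₁) (h3 : T v ∈ T '' B₁) :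
    T '' convexHull ℝ (B₂ ∪ {v}) = T '' B₂ := by
  rw [union_singleton] at h1 ⊢
  obtain ⟨b, hb, hTb⟩ := h3
  have hbv : b ≠ v := fun h => h2 (h ▸ hb)
  exact T.image_convexHull_insert_of_map_mem_image hB₂
    (T.map_mem_image_of_mem_convexHull_insert hB₂ (h1 hb) hbv hTb)

theorem stmt_2 {n : ℕ} (B₁ B₂ : Set (Fin n → ℝ)) (v : Fin n → ℝ)
    (T : (Fin n → ℝ) →ₗ[ℝ] (Fin n → ℝ))
    (hB₁ : Convex ℝ B₁) (hB₂ : Convex ℝ B₂)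
    (h1 : B₁ ⊆ convexHull ℝ (B₂ ∪ {v})) (h2 : v ∉ B₁) (h3 : T v ∈ T '' B₁) :
    T '' convexHull ℝ (B₂ ∪ {v}) = T '' B₂ :=
  stmt_2_general B₁ B₂ v T hB₂ h1 h2 h3
end

section
/- Let $B \subseteq \mathbb{R}^n$ be an $(n-1)$-dimensional convex body containing $0$ and contained in the hyperplane $Y = \{x \in \mathbb{R}^n : x_n = 0\}$. Let $d \in [1,2]$ and $u \in \mathbb{R}^n$ be such that the cone $C = \mathrm{conv}((B+u) \cup \{e^n + u\})$ contains $0$. Then for every vector $v \in dC$ with $v_n \ge u_n + 1$, there exists a linear projection $P : \mathbb{R}^n \to Y$ such that $P(e^n) \in B$ and $P(v - u) \in B$. -/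
open scoped Pointwise

private noncomputable def projMap (n : ℕ) (w : Fin (n + 1) → ℝ) :
    (Fin (n + 1) → ℝ) →ₗ[ℝ] (Fin (n + 1) → ℝ) :=
  LinearMap.id - (LinearMap.proj (Fin.last n)).smulRight w

private lemma projMap_apply (n : ℕ) (w x : Fin (n + 1) → ℝ) :
    projMap n w x = x - x (Fin.last n) • w := by
  simp [projMap, LinearMap.sub_apply, LinearMap.smulRight_apply, LinearMap.proj_apply]

private lemma combo_mem {m : ℕ} {B : Set (Fin m → ℝ)} (hB : Convex ℝ B)
    (h0 : (0 : Fin m → ℝ) ∈ B) {x y : Fin m → ℝ} (hx : x ∈ B) (hy : y ∈ B) {c1 c2 : ℝ}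
    (h1 : 0 ≤ c1) (h2 : 0 ≤ c2) (hs : c1 + c2 ≤ 1) : c1 • x + c2 • y ∈ B := by
  have h := hB.sum_mem (t := (Finset.univ : Finset (Fin 3)))
    (w := ![c1, c2, 1 - c1 - c2]) (z := ![x, y, 0]) ?_ ?_ ?_
  · simpa [Fin.sum_univ_three] using h
  · intro i _; fin_cases i <;> simp <;> linarith
  · simp [Fin.sum_univ_three]
  · intro i _; fin_cases i <;> simp [hx, hy, h0]

theorem stmt_4 (n : ℕ) (hn : 1 ≤ n)
    (B : Set (Fin (n + 1) → ℝ))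
    (hBconv : Convex ℝ B) (hBcomp : IsCompact B)
    (hB0 : (0 : Fin (n + 1) → ℝ) ∈ B)
    (hBY : ∀ x ∈ B, x (Fin.last n) = 0)
    (hBdim : Module.finrank ℝ (affineSpan ℝ B).direction = n)
    (d : ℝ) (hd : d ∈ Set.Icc (1 : ℝ) 2) (u : Fin (n + 1) → ℝ)
    (C : Set (Fin (n + 1) → ℝ))
    (hC : C = convexHull ℝ (((· + u) '' B) ∪ {(Pi.single (Fin.last n) 1 : Fin (n + 1) → ℝ) + u}))
    (h0C : (0 : Fin (n + 1) → ℝ) ∈ C)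
    (v : Fin (n + 1) → ℝ) (hv : v ∈ d • C)
    (hvn : u (Fin.last n) + 1 ≤ v (Fin.last n)) :
    ∃ P : (Fin (n + 1) → ℝ) →ₗ[ℝ] (Fin (n + 1) → ℝ),
      (∀ x, P (P x) = P x) ∧
      Set.range P = {x : Fin (n + 1) → ℝ | x (Fin.last n) = 0} ∧
      P (Pi.single (Fin.last n) 1) ∈ B ∧ P (v - u) ∈ B := by
  obtain ⟨hd1, hd2⟩ := hd
  set e : Fin (n + 1) → ℝ := Pi.single (Fin.last n) 1 with he
  have heN : e (Fin.last n) = 1 := by simp [he]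
  have himg : Convex ℝ ((· + u) '' B) := by
    have h2 : ((· + u) '' B) = (fun x => u + x) '' B := by
      ext y; simp [add_comm]
    rw [h2]; exact hBconv.translate u
  have himgne : ((· + u) '' B).Nonempty := ⟨0 + u, Set.mem_image_of_mem _ hB0⟩
  rw [hC, Set.union_singleton, convexHull_insert himgne, himg.convexHull_eq] at h0C hv
  rw [Set.mem_smul_set] at hv
  obtain ⟨c, hcC, rfl⟩ := hv
  rw [mem_convexJoin] at h0C hcC
  obtain ⟨p, hp, x, ⟨b₀, hb₀B, rfl⟩, hseg0⟩ := h0C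
  obtain ⟨q, hq, y, ⟨b, hbB, rfl⟩, hsegc⟩ := hcC
  rw [Set.mem_singleton_iff] at hp hq
  subst hp; subst hq
  obtain ⟨a, a₁, ha, ha₁, hsum, heq0⟩ := hseg0
  obtain ⟨t, r, htn, hrn, hts, heqc⟩ := hsegc
  have ha₁' : a₁ = 1 - a := by linarith
  subst ha₁'
  have hr' : r = 1 - t := by linarith
  subst hr'
  have ha1 : a ≤ 1 := by linarith
  have ht1 : t ≤ 1 := by linarith
  have hb₀N : b₀ (Fin.last n) = 0 := hBY _ hb₀B
  have hbN : b (Fin.last n) = 0 := hBY _ hbB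
  -- coordinate facts
  have H2 : ∀ i, u i = -(a * e i) - (1 - a) * b₀ i := by
    intro i
    have h := congrFun heq0 i
    simp only [Pi.add_apply, Pi.smul_apply, smul_eq_mul, Pi.zero_apply] at h
    linear_combination h
  have H4 : u (Fin.last n) = -a := by
    have h := H2 (Fin.last n); rw [heN, hb₀N] at h; linarith
  have H1 : ∀ i, d * c i = d * t * e i + d * (1 - t) * b i + d * u i := by
    intro i
    have h := congrFun heqc i
    simp only [Pi.add_apply, Pi.smul_apply, smul_eq_mul] at h
    linear_combination (-d) * h
  have H5 : d * c (Fin.last n) = d * t - d * a := by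
    have h := H1 (Fin.last n); rw [heN, hbN, H4] at h; linear_combination h
  simp only [Pi.smul_apply, smul_eq_mul] at hvn
  set δ : ℝ := d * c (Fin.last n) - u (Fin.last n) with hδ
  have hδ1 : 1 ≤ δ := by rw [hδ]; linarith
  have hδpos : 0 < δ := by linarith
  have hδ0 : δ ≠ 0 := ne_of_gt hδpos
  have hδval : δ = d * t - d * a + a := by rw [hδ, H5, H4]; ring
  set w : Fin (n + 1) → ℝ := e + δ⁻¹ • (u - u (Fin.last n) • e) with hw
  have Hw : ∀ i, w i = e i + δ⁻¹ * (u i - u (Fin.last n) * e i) := by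
    intro i
    simp [hw, Pi.add_apply, Pi.smul_apply, Pi.sub_apply, smul_eq_mul]
  have hwN : w (Fin.last n) = 1 := by rw [Hw, heN]; ring
  have hP : ∀ x : Fin (n + 1) → ℝ, projMap n w x = x - x (Fin.last n) • w :=
    projMap_apply n w
  refine ⟨projMap n w, ?_, ?_, ?_, ?_⟩
  case _ =>
    intro x
    have hx0 : (projMap n w x) (Fin.last n) = 0 := by
      rw [hP]; simp [hwN]
    rw [hP (projMap n w x), hx0, zero_smul, sub_zero]
  case _ =>
    ext z
    constructor
    · rintro ⟨x, rfl⟩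
      show _ = (0:ℝ)
      rw [hP]; simp [hwN]
    · intro hz
      refine ⟨z, ?_⟩
      rw [hP, hz, zero_smul, sub_zero]
  case _ =>
    have hPe : projMap n w e = (δ⁻¹ * (1 - a)) • b₀ := by
      funext i
      rw [hP]
      simp only [Pi.sub_apply, Pi.smul_apply, smul_eq_mul, heN]
      linear_combination (-1 : ℝ) * Hw i - δ⁻¹ * H2 i + (δ⁻¹ * e i) * H4
    rw [hPe]
    have hc1 : 0 ≤ δ⁻¹ * (1 - a) := mul_nonneg (inv_nonneg.2 hδpos.le) (by linarith)
    have hc2 : δ⁻¹ * (1 - a) ≤ 1 := by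
      have h := mul_le_mul_of_nonneg_left (show (1:ℝ) - a ≤ δ by linarith)
        (inv_nonneg.2 hδpos.le)
      rwa [inv_mul_cancel₀ hδ0] at h
    exact hBconv.smul_mem_of_zero_mem hB0 hb₀B ⟨hc1, hc2⟩
  case _ =>
    have hkey : projMap n w (d • c - u)
        = (d * (1 - t)) • b + ((2 - d) * (1 - a)) • b₀ := by
      funext i
      rw [hP]
      simp only [Pi.sub_apply, Pi.add_apply, Pi.smul_apply, smul_eq_mul]
      have H3 : (d * c (Fin.last n) - u (Fin.last n)) * w i
          = (d * c (Fin.last n) - u (Fin.last n)) * e i + (u i - u (Fin.last n) * e i) := by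
        rw [Hw i, ← hδ, mul_add, ← mul_assoc, mul_inv_cancel₀ hδ0, one_mul]
      linear_combination H1 i + (d - 2) * H2 i - H3 + (2 * e i) * H4 - e i * H5
    rw [hkey]
    have hc1 : 0 ≤ d * (1 - t) := mul_nonneg (by linarith) (by linarith)
    have hc2 : 0 ≤ (2 - d) * (1 - a) := mul_nonneg (by linarith) (by linarith)
    have hcs : d * (1 - t) + (2 - d) * (1 - a) ≤ 1 := by nlinarith [hδval, hδ1]
    exact combo_mem hBconv hB0 hbB hb₀B hc1 hc2 hcs
end

section
/- Every Hanner polytope in $\mathbb{R}^n$ has Banach–Mazur distance exactly $\sqrt{n}$ to the $n$-dimensional Euclidean ball $\mathbb{B}_2^n$. -/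
open scoped ENNReal

/-- The (multiplicative) Banach–Mazur distance between two normed spaces:
the infimum of `‖T‖ * ‖T⁻¹‖` over invertible (continuous) linear maps `T : E → F`. -/
noncomputable def dBM (E F : Type*) [NormedAddCommGroup E] [NormedSpace ℝ E]
    [NormedAddCommGroup F] [NormedSpace ℝ F] : ℝ :=
  sInf {c : ℝ | ∃ T : E ≃L[ℝ] F, c = ‖(T : E →L[ℝ] F)‖ * ‖(T.symm : F →L[ℝ] E)‖}

/-- A (normed space represented by a) Hanner polytope: either a `1`-dimensional space
(a symmetric segment), an `ℓ₁`- or `ℓ∞`-sum of two Hanner spaces, or an isometric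
copy of a Hanner space. -/
inductive IsHanner : ∀ (X : Type) [NormedAddCommGroup X] [NormedSpace ℝ X], Prop where
  | segment (X : Type) [NormedAddCommGroup X] [NormedSpace ℝ X]
      (h : Module.finrank ℝ X = 1) : IsHanner X
  | sumOne (X Y : Type) [NormedAddCommGroup X] [NormedSpace ℝ X]
      [NormedAddCommGroup Y] [NormedSpace ℝ Y]
      (hX : IsHanner X) (hY : IsHanner Y) : IsHanner (WithLp 1 (X × Y))
  | sumTop (X Y : Type) [NormedAddCommGroup X] [NormedSpace ℝ X]
      [NormedAddCommGroup Y] [NormedSpace ℝ Y]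
      (hX : IsHanner X) (hY : IsHanner Y) : IsHanner (WithLp ∞ (X × Y))
  | congr (X Y : Type) [NormedAddCommGroup X] [NormedSpace ℝ X]
      [NormedAddCommGroup Y] [NormedSpace ℝ Y]
      (hX : IsHanner X) (e : X ≃ₗᵢ[ℝ] Y) : IsHanner Y

/-! Write `d(X)` for the Banach–Mazur distance from `X` to the Euclidean space of the same
dimension, and call `‖T‖ ‖T⁻¹‖` the distortion of an isomorphism `T`. For `p ∈ {1, ∞}` one has
`d(X ⊕ₚ Y)² = d(X)² + d(Y)²`. For the upper bound, take near-optimal embeddings of `X` and `Y`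
into Euclidean spaces, rescale them to be expanding (`p = ∞`) or contracting (`p = 1`), and map
the sum into the orthogonal sum of their targets. For the lower bound, restrict an embedding `T`
of the sum to the two summands, choose unit vectors `x₀`, `y₀` on which the restrictions are
extremal, and apply the parallelogram law to the images of `(s x₀, ± t y₀)` for suitable scalars
`s`, `t`. As `d = 1` in dimension one, induction on the Hanner structure gives `d(X) = √n`. -/

open Module Filter Topology

section BanachMazur

variable {X Y F : Type*} [NormedAddCommGroup X] [NormedSpace ℝ X]
  [NormedAddCommGroup Y] [NormedSpace ℝ Y] [NormedAddCommGroup F] [NormedSpace ℝ F]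

lemma ContinuousLinearEquiv.norm_le_norm_symm_mul_norm_apply (T : X ≃L[ℝ] F) (x : X) :
    ‖x‖ ≤ ‖(T.symm : F →L[ℝ] X)‖ * ‖T x‖ := by
  simpa using (T.symm : F →L[ℝ] X).le_opNorm (T x)

noncomputable def distortion (T : X ≃L[ℝ] F) : ℝ :=
  ‖(T : X →L[ℝ] F)‖ * ‖(T.symm : F →L[ℝ] X)‖

lemma distortion_nonneg (T : X ≃L[ℝ] F) : 0 ≤ distortion T := by
  unfold distortion; positivity

lemma dBM_eq_sInf_range : dBM X F = sInf (Set.range (distortion (X := X) (F := F))) := by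
  simp only [dBM, distortion, Set.range, eq_comm]

lemma dBM_nonneg : 0 ≤ dBM X F := by
  rw [dBM_eq_sInf_range]
  exact Real.sInf_nonneg (Set.forall_mem_range.2 distortion_nonneg)

lemma dBM_le_distortion (T : X ≃L[ℝ] F) : dBM X F ≤ distortion T := by
  rw [dBM_eq_sInf_range]
  exact csInf_le ⟨0, Set.forall_mem_range.2 distortion_nonneg⟩ ⟨T, rfl⟩

lemma le_dBM [Nonempty (X ≃L[ℝ] F)] {c : ℝ} (h : ∀ T : X ≃L[ℝ] F, c ≤ distortion T) :
    c ≤ dBM X F := by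
  rw [dBM_eq_sInf_range]
  exact le_csInf (Set.range_nonempty _) (Set.forall_mem_range.2 h)

lemma dBM_le_of_bounds (T : X ≃L[ℝ] F) {C₁ C₂ : ℝ} (hC₁ : 0 ≤ C₁) (hC₂ : 0 ≤ C₂)
    (h₁ : ∀ x, ‖T x‖ ≤ C₁ * ‖x‖) (h₂ : ∀ y, ‖T.symm y‖ ≤ C₂ * ‖y‖) : dBM X F ≤ C₁ * C₂ :=
  (dBM_le_distortion T).trans <| mul_le_mul ((T : X →L[ℝ] F).opNorm_le_bound hC₁ h₁)
    ((T.symm : F →L[ℝ] X).opNorm_le_bound hC₂ h₂) (norm_nonneg _) hC₁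

lemma exists_tendsto_distortion_dBM [Nonempty (X ≃L[ℝ] F)] :
    ∃ T : ℕ → X ≃L[ℝ] F, Tendsto (fun n ↦ distortion (T n)) atTop (𝓝 (dBM X F)) := by
  obtain ⟨u, -, hu, hmem⟩ := exists_seq_tendsto_sInf (Set.range_nonempty _)
    ⟨0, Set.forall_mem_range.2 (distortion_nonneg (X := X) (F := F))⟩
  choose T hT using hmem
  exact ⟨T, by simpa only [hT, dBM_eq_sInf_range] using hu⟩

lemma distortion_isometry_trans (e : X ≃ₗᵢ[ℝ] Y) (T : Y ≃L[ℝ] F) :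
    distortion (e.toContinuousLinearEquiv.trans T) = distortion T := by
  simp only [distortion]
  congr 1
  · exact (T : Y →L[ℝ] F).opNorm_comp_linearIsometryEquiv e
  · exact ContinuousLinearMap.opNorm_linearIsometryEquiv_comp e.symm (T.symm : F →L[ℝ] Y)

lemma dBM_congr_left (e : X ≃ₗᵢ[ℝ] Y) : dBM X F = dBM Y F := by
  have hsurj : Function.Surjective (e.toContinuousLinearEquiv.trans : (Y ≃L[ℝ] F) → _) :=
    fun T ↦ ⟨e.toContinuousLinearEquiv.symm.trans T, by ext; simp⟩
  rw [dBM_eq_sInf_range, dBM_eq_sInf_range, ← hsurj.range_comp]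
  simp only [Function.comp_def, distortion_isometry_trans]

end BanachMazur

section Euclidean

variable {X Y G : Type*} [NormedAddCommGroup X] [NormedSpace ℝ X]
  [NormedAddCommGroup Y] [NormedSpace ℝ Y] [NormedAddCommGroup G] [InnerProductSpace ℝ G]

noncomputable def dBMEuclid (X : Type*) [NormedAddCommGroup X] [NormedSpace ℝ X] : ℝ :=
  dBM X (EuclideanSpace ℝ (Fin (finrank ℝ X)))

instance [FiniteDimensional ℝ X] : Nonempty (X ≃L[ℝ] EuclideanSpace ℝ (Fin (finrank ℝ X))) :=
  ⟨.ofFinrankEq finrank_euclideanSpace_fin.symm⟩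

lemma exists_equiv_euclidean_norm_eq [FiniteDimensional ℝ X] (S : X →ₗ[ℝ] G)
    (hS : Function.Injective S) :
    ∃ T : X ≃L[ℝ] EuclideanSpace ℝ (Fin (finrank ℝ X)), ∀ x, ‖T x‖ = ‖S x‖ := by
  let e : LinearMap.range S ≃ₗᵢ[ℝ] EuclideanSpace ℝ (Fin (finrank ℝ X)) :=
    ((stdOrthonormalBasis ℝ _).reindex (finCongr (LinearMap.finrank_range_of_inj hS))).repr
  refine ⟨(LinearEquiv.ofInjective S hS).toContinuousLinearEquiv.trans
    e.toContinuousLinearEquiv, fun x ↦ ?_⟩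
  exact e.norm_map _

lemma dBMEuclid_le_of_bounds [FiniteDimensional ℝ X] (S : X →ₗ[ℝ] G) {C₁ C₂ : ℝ}
    (hC₁ : 0 ≤ C₁) (hC₂ : 0 ≤ C₂) (h₁ : ∀ x, ‖S x‖ ≤ C₁ * ‖x‖) (h₂ : ∀ x, ‖x‖ ≤ C₂ * ‖S x‖) :
    dBMEuclid X ≤ C₁ * C₂ := by
  have hS : Function.Injective S := by
    refine (injective_iff_map_eq_zero S).2 fun x hx ↦ norm_le_zero_iff.1 ?_
    simpa [hx] using h₂ x
  obtain ⟨T, hT⟩ := exists_equiv_euclidean_norm_eq S hS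
  refine dBM_le_of_bounds T hC₁ hC₂ (fun x ↦ hT x ▸ h₁ x) fun y ↦ ?_
  simpa only [← hT, T.apply_symm_apply] using h₂ (T.symm y)

lemma dBMEuclid_congr (e : X ≃ₗᵢ[ℝ] Y) : dBMEuclid X = dBMEuclid Y := by
  rw [dBMEuclid, dBMEuclid, ← e.toLinearEquiv.finrank_eq, dBM_congr_left e]

lemma dBMEuclid_of_finrank_eq_one (h : finrank ℝ X = 1) : dBMEuclid X = 1 := by
  have : FiniteDimensional ℝ X := .of_finrank_eq_succ h
  have : Nontrivial X := nontrivial_of_finrank_eq_succ h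
  let b := finBasisOfFinrankEq ℝ X h
  have hS : ∀ x, ‖(‖b 0‖ • b.coord 0) x‖ = ‖x‖ := fun x ↦ by
    conv_rhs => rw [← b.sum_repr x]
    simp [norm_smul, mul_comm]
  refine le_antisymm ?_ (le_dBM fun T ↦ T.one_le_norm_mul_norm_symm)
  simpa using dBMEuclid_le_of_bounds (‖b 0‖ • b.coord 0) zero_le_one zero_le_one
    (fun x ↦ by rw [hS, one_mul]) (fun x ↦ by rw [hS, one_mul])

end Euclidean

section Parallelogram

variable {X Y G : Type*} [NormedAddCommGroup X] [NormedSpace ℝ X] [NormedAddCommGroup Y]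
  [NormedSpace ℝ Y] [NormedAddCommGroup G] [InnerProductSpace ℝ G]
  {S₁ : X →ₗ[ℝ] G} {S₂ : Y →ₗ[ℝ] G} {c : ℝ} {x₀ : X} {y₀ : Y}

lemma norm_sq_add_norm_sq_le_of_forall_norm_add_le
    (h : ∀ x y, ‖S₁ x + S₂ y‖ ≤ c * max ‖x‖ ‖y‖) (hx₀ : ‖x₀‖ = 1) (hy₀ : ‖y₀‖ = 1) :
    ‖S₁ x₀‖ ^ 2 + ‖S₂ y₀‖ ^ 2 ≤ c ^ 2 := by
  have hadd : ‖S₁ x₀ + S₂ y₀‖ ≤ c := by simpa [hx₀, hy₀] using h x₀ y₀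
  have hsub : ‖S₁ x₀ - S₂ y₀‖ ≤ c := by simpa [hx₀, hy₀, sub_eq_add_neg] using h x₀ (-y₀)
  have := parallelogram_law_with_norm ℝ (S₁ x₀) (S₂ y₀)
  nlinarith [norm_nonneg (S₁ x₀ + S₂ y₀), norm_nonneg (S₁ x₀ - S₂ y₀)]

lemma inv_sq_add_inv_sq_le_of_forall_le_norm_add
    (h : ∀ x y, ‖x‖ + ‖y‖ ≤ c * ‖S₁ x + S₂ y‖) (hx₀ : ‖x₀‖ = 1) (hy₀ : ‖y₀‖ = 1)
    (hα : 0 < ‖S₁ x₀‖) (hβ : 0 < ‖S₂ y₀‖) :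
    ‖S₁ x₀‖⁻¹ ^ 2 + ‖S₂ y₀‖⁻¹ ^ 2 ≤ c ^ 2 := by
  -- Test `h` at `x = ‖S₁ x₀‖⁻² x₀` and `y = ± ‖S₂ y₀‖⁻² y₀`, where `‖S₁ x‖² = ‖x‖` and
  -- `‖S₂ y‖² = ‖y‖`.
  have ha : ‖S₁ (‖S₁ x₀‖⁻¹ ^ 2 • x₀)‖ ^ 2 = ‖S₁ x₀‖⁻¹ ^ 2 := by
    rw [map_smul, norm_smul, Real.norm_of_nonneg (by positivity)]
    field_simp
  have hb : ‖S₂ (‖S₂ y₀‖⁻¹ ^ 2 • y₀)‖ ^ 2 = ‖S₂ y₀‖⁻¹ ^ 2 := by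
    rw [map_smul, norm_smul, Real.norm_of_nonneg (by positivity)]
    field_simp
  set a := ‖S₁ x₀‖⁻¹ ^ 2
  set b := ‖S₂ y₀‖⁻¹ ^ 2
  set u := S₁ (a • x₀)
  set v := S₂ (b • y₀)
  have hnorm : ‖a • x₀‖ + ‖b • y₀‖ = a + b := by
    rw [norm_smul, norm_smul, hx₀, hy₀, Real.norm_of_nonneg (by positivity),
      Real.norm_of_nonneg (by positivity), mul_one, mul_one]
  have hadd : a + b ≤ c * ‖u + v‖ := hnorm ▸ h (a • x₀) (b • y₀)
  have hsub : a + b ≤ c * ‖u - v‖ := by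
    simpa only [map_neg, norm_neg, sub_eq_add_neg, hnorm] using h (a • x₀) (-(b • y₀))
  have hr : 0 < a + b := by positivity
  have := parallelogram_law_with_norm ℝ u v
  nlinarith [mul_self_le_mul_self hr.le hadd, mul_self_le_mul_self hr.le hsub]

end Parallelogram

section Extremal

variable {X F : Type*} [NormedAddCommGroup X] [NormedSpace ℝ X]
  [NormedAddCommGroup F] [NormedSpace ℝ F]

lemma norm_apply_eq_norm_apply_normalize_mul (f : X →L[ℝ] F) {x : X} (hx : x ≠ 0) :
    ‖f x‖ = ‖f ((‖x‖⁻¹ : ℝ) • x)‖ * ‖x‖ := by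
  rw [map_smul, norm_smul, norm_inv, norm_norm, mul_comm ‖x‖⁻¹,
    inv_mul_cancel_right₀ (norm_ne_zero_iff.2 hx)]

lemma norm_inv_smul_mem_sphere {x : X} (hx : x ≠ 0) :
    (‖x‖⁻¹ : ℝ) • x ∈ Metric.sphere (0 : X) 1 := by
  rw [mem_sphere_zero_iff_norm, norm_smul, norm_inv, norm_norm,
    inv_mul_cancel₀ (norm_ne_zero_iff.2 hx)]

lemma exists_norm_eq_one_forall_norm_apply_le [FiniteDimensional ℝ X] [Nontrivial X]
    (f : X →L[ℝ] F) :
    ∃ x₀, ‖x₀‖ = 1 ∧ ∀ x, ‖f x‖ ≤ ‖f x₀‖ * ‖x‖ := by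
  obtain ⟨x₀, hx₀, hmax⟩ := (isCompact_sphere (0 : X) 1).exists_isMaxOn
    (NormedSpace.sphere_nonempty.2 zero_le_one) f.continuous.norm.continuousOn
  refine ⟨x₀, mem_sphere_zero_iff_norm.1 hx₀, fun x ↦ ?_⟩
  rcases eq_or_ne x 0 with rfl | hx
  · simp
  rw [norm_apply_eq_norm_apply_normalize_mul f hx]
  exact mul_le_mul_of_nonneg_right (hmax (norm_inv_smul_mem_sphere hx)) (norm_nonneg _)

lemma exists_norm_eq_one_forall_le_norm_apply [FiniteDimensional ℝ X] [Nontrivial X]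
    (f : X →L[ℝ] F) :
    ∃ x₀, ‖x₀‖ = 1 ∧ ∀ x, ‖f x₀‖ * ‖x‖ ≤ ‖f x‖ := by
  obtain ⟨x₀, hx₀, hmin⟩ := (isCompact_sphere (0 : X) 1).exists_isMinOn
    (NormedSpace.sphere_nonempty.2 zero_le_one) f.continuous.norm.continuousOn
  refine ⟨x₀, mem_sphere_zero_iff_norm.1 hx₀, fun x ↦ ?_⟩
  rcases eq_or_ne x 0 with rfl | hx
  · simp
  rw [norm_apply_eq_norm_apply_normalize_mul f hx]
  exact mul_le_mul_of_nonneg_right (hmin (norm_inv_smul_mem_sphere hx)) (norm_nonneg _)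

end Extremal

section Embeddings

variable (p : ℝ≥0∞) (X Y : Type*) [NormedAddCommGroup X] [NormedSpace ℝ X]
  [NormedAddCommGroup Y] [NormedSpace ℝ Y]

noncomputable def inlLp : X →L[ℝ] WithLp p (X × Y) :=
  (WithLp.prodContinuousLinearEquiv p ℝ X Y).symm.toContinuousLinearMap.comp
    (ContinuousLinearMap.inl ℝ X Y)

noncomputable def inrLp : Y →L[ℝ] WithLp p (X × Y) :=
  (WithLp.prodContinuousLinearEquiv p ℝ X Y).symm.toContinuousLinearMap.comp
    (ContinuousLinearMap.inr ℝ X Y)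

variable {X Y}

@[simp] lemma norm_inlLp [Fact (1 ≤ p)] (x : X) : ‖inlLp p X Y x‖ = ‖x‖ :=
  WithLp.norm_toLp_fst p X Y x

@[simp] lemma norm_inrLp [Fact (1 ≤ p)] (y : Y) : ‖inrLp p X Y y‖ = ‖y‖ :=
  WithLp.norm_toLp_snd p X Y y

lemma inlLp_add_inrLp (x : X) (y : Y) :
    inlLp p X Y x + inrLp p X Y y = WithLp.toLp p (x, y) := by
  simp [inlLp, inrLp, ← WithLp.toLp_add]

end Embeddings

lemma ContinuousLinearMap.comp_inlLp_add_comp_inrLp {p : ℝ≥0∞} {X Y G : Type*}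
    [NormedAddCommGroup X] [NormedSpace ℝ X] [NormedAddCommGroup Y] [NormedSpace ℝ Y]
    [NormedAddCommGroup G] [NormedSpace ℝ G] [Fact (1 ≤ p)] (T : WithLp p (X × Y) →L[ℝ] G)
    (x : X) (y : Y) :
    T.comp (inlLp p X Y) x + T.comp (inrLp p X Y) y = T (WithLp.toLp p (x, y)) := by
  rw [comp_apply, comp_apply, ← map_add, inlLp_add_inrLp]

lemma sqrt_sq_add_sq_le_mul {d₁ d₂ u v m k : ℝ} (hd₁ : 0 ≤ d₁) (hd₂ : 0 ≤ d₂) (hm : 0 ≤ m)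
    (hk : 0 ≤ k) (h₁ : d₁ ≤ u * k) (h₂ : d₂ ≤ v * k) (huv : u ^ 2 + v ^ 2 ≤ m ^ 2) :
    √(d₁ ^ 2 + d₂ ^ 2) ≤ m * k := by
  rw [Real.sqrt_le_left (by positivity)]
  calc d₁ ^ 2 + d₂ ^ 2 ≤ (u * k) ^ 2 + (v * k) ^ 2 :=
        add_le_add (pow_le_pow_left₀ hd₁ h₁ 2) (pow_le_pow_left₀ hd₂ h₂ 2)
    _ = (u ^ 2 + v ^ 2) * k ^ 2 := by ring
    _ ≤ (m * k) ^ 2 := by rw [mul_pow]; gcongr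

section LowerBound

variable {X Y G : Type*} [NormedAddCommGroup X] [NormedSpace ℝ X] [FiniteDimensional ℝ X]
  [Nontrivial X] [NormedAddCommGroup Y] [NormedSpace ℝ Y] [FiniteDimensional ℝ Y] [Nontrivial Y]
  [NormedAddCommGroup G] [InnerProductSpace ℝ G]

lemma sqrt_dBMEuclid_sq_add_le_distortion_withLp_top (T : WithLp ∞ (X × Y) ≃L[ℝ] G) :
    √(dBMEuclid X ^ 2 + dBMEuclid Y ^ 2) ≤ distortion T := by
  set nT := ‖(T : WithLp ∞ (X × Y) →L[ℝ] G)‖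
  set nS := ‖(T.symm : G →L[ℝ] WithLp ∞ (X × Y))‖
  set S₁ := (T : WithLp ∞ (X × Y) →L[ℝ] G).comp (inlLp ∞ X Y)
  set S₂ := (T : WithLp ∞ (X × Y) →L[ℝ] G).comp (inrLp ∞ X Y)
  have hpair : ∀ x y, ‖S₁ x + S₂ y‖ ≤ nT * max ‖x‖ ‖y‖ := fun x y ↦ by
    simpa only [S₁, S₂, ContinuousLinearMap.comp_inlLp_add_comp_inrLp, WithLp.prod_norm_eq_sup,
      WithLp.toLp_fst, WithLp.toLp_snd] using
      (T : WithLp ∞ (X × Y) →L[ℝ] G).le_opNorm (WithLp.toLp ∞ (x, y))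
  obtain ⟨x₀, hx₀, hS₁⟩ := exists_norm_eq_one_forall_norm_apply_le S₁
  obtain ⟨y₀, hy₀, hS₂⟩ := exists_norm_eq_one_forall_norm_apply_le S₂
  have hX : dBMEuclid X ≤ ‖S₁ x₀‖ * nS :=
    dBMEuclid_le_of_bounds S₁.toLinearMap (norm_nonneg _) (norm_nonneg _) hS₁
      fun x ↦ by simpa [S₁] using T.norm_le_norm_symm_mul_norm_apply (inlLp ∞ X Y x)
  have hY : dBMEuclid Y ≤ ‖S₂ y₀‖ * nS :=
    dBMEuclid_le_of_bounds S₂.toLinearMap (norm_nonneg _) (norm_nonneg _) hS₂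
      fun y ↦ by simpa [S₂] using T.norm_le_norm_symm_mul_norm_apply (inrLp ∞ X Y y)
  exact sqrt_sq_add_sq_le_mul dBM_nonneg dBM_nonneg (norm_nonneg _) (norm_nonneg _) hX hY
    (norm_sq_add_norm_sq_le_of_forall_norm_add_le (S₁ := S₁.toLinearMap)
      (S₂ := S₂.toLinearMap) hpair hx₀ hy₀)

lemma sqrt_dBMEuclid_sq_add_le_distortion_withLp_one (T : WithLp 1 (X × Y) ≃L[ℝ] G) :
    √(dBMEuclid X ^ 2 + dBMEuclid Y ^ 2) ≤ distortion T := by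
  set nT := ‖(T : WithLp 1 (X × Y) →L[ℝ] G)‖
  set nS := ‖(T.symm : G →L[ℝ] WithLp 1 (X × Y))‖
  set S₁ := (T : WithLp 1 (X × Y) →L[ℝ] G).comp (inlLp 1 X Y)
  set S₂ := (T : WithLp 1 (X × Y) →L[ℝ] G).comp (inrLp 1 X Y)
  have hpair : ∀ x y, ‖x‖ + ‖y‖ ≤ nS * ‖S₁ x + S₂ y‖ := fun x y ↦ by
    simpa only [S₁, S₂, ContinuousLinearMap.comp_inlLp_add_comp_inrLp, WithLp.prod_norm_eq_of_L1,
      WithLp.toLp_fst, WithLp.toLp_snd, ContinuousLinearEquiv.coe_coe] using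
      T.norm_le_norm_symm_mul_norm_apply (WithLp.toLp 1 (x, y))
  obtain ⟨x₀, hx₀, hS₁⟩ := exists_norm_eq_one_forall_le_norm_apply S₁
  obtain ⟨y₀, hy₀, hS₂⟩ := exists_norm_eq_one_forall_le_norm_apply S₂
  have hα : 0 < ‖S₁ x₀‖ := pos_of_mul_pos_right (a := nS)
    (one_pos.trans_le (by simpa [hx₀] using hpair x₀ 0)) (norm_nonneg _)
  have hβ : 0 < ‖S₂ y₀‖ := pos_of_mul_pos_right (a := nS)
    (one_pos.trans_le (by simpa [hy₀] using hpair 0 y₀)) (norm_nonneg _)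
  have hX : dBMEuclid X ≤ ‖S₁ x₀‖⁻¹ * nT :=
    (dBMEuclid_le_of_bounds S₁.toLinearMap (norm_nonneg _) (inv_nonneg.2 hα.le)
      (fun x ↦ by simpa [S₁] using (T : WithLp 1 (X × Y) →L[ℝ] G).le_opNorm (inlLp 1 X Y x))
      fun x ↦ (le_inv_mul_iff₀ hα).2 (hS₁ x)).trans_eq (mul_comm _ _)
  have hY : dBMEuclid Y ≤ ‖S₂ y₀‖⁻¹ * nT :=
    (dBMEuclid_le_of_bounds S₂.toLinearMap (norm_nonneg _) (inv_nonneg.2 hβ.le)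
      (fun y ↦ by simpa [S₂] using (T : WithLp 1 (X × Y) →L[ℝ] G).le_opNorm (inrLp 1 X Y y))
      fun y ↦ (le_inv_mul_iff₀ hβ).2 (hS₂ y)).trans_eq (mul_comm _ _)
  rw [distortion, mul_comm]
  exact sqrt_sq_add_sq_le_mul dBM_nonneg dBM_nonneg (norm_nonneg _) (norm_nonneg _) hX hY
    (inv_sq_add_inv_sq_le_of_forall_le_norm_add (S₁ := S₁.toLinearMap)
      (S₂ := S₂.toLinearMap) hpair hx₀ hy₀ hα hβ)

end LowerBound

section UpperBound

variable {X Y E F : Type*} [NormedAddCommGroup X] [NormedSpace ℝ X] [NormedAddCommGroup Y]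
  [NormedSpace ℝ Y] [NormedAddCommGroup E] [InnerProductSpace ℝ E] [NormedAddCommGroup F]
  [InnerProductSpace ℝ F]

noncomputable def prodMapL2 (p : ℝ≥0∞) (f : X →ₗ[ℝ] E) (g : Y →ₗ[ℝ] F) :
    WithLp p (X × Y) →ₗ[ℝ] WithLp 2 (E × F) :=
  (WithLp.linearEquiv 2 ℝ (E × F)).symm.toLinearMap ∘ₗ f.prodMap g ∘ₗ
    (WithLp.linearEquiv p ℝ (X × Y)).toLinearMap

@[simp] lemma prodMapL2_fst (p : ℝ≥0∞) (f : X →ₗ[ℝ] E) (g : Y →ₗ[ℝ] F)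
    (z : WithLp p (X × Y)) :
    (prodMapL2 p f g z).fst = f z.fst := rfl

@[simp] lemma prodMapL2_snd (p : ℝ≥0∞) (f : X →ₗ[ℝ] E) (g : Y →ₗ[ℝ] F)
    (z : WithLp p (X × Y)) :
    (prodMapL2 p f g z).snd = g z.snd := rfl

lemma exists_expanding_le_distortion (T : X ≃L[ℝ] E) :
    ∃ S : X →ₗ[ℝ] E, ∀ x, ‖x‖ ≤ ‖S x‖ ∧ ‖S x‖ ≤ distortion T * ‖x‖ := by
  refine ⟨‖(T.symm : E →L[ℝ] X)‖ • (T : X →ₗ[ℝ] E), fun x ↦ ⟨?_, ?_⟩⟩ <;>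
    simp only [LinearMap.smul_apply, norm_smul, norm_norm]
  · exact T.norm_le_norm_symm_mul_norm_apply x
  · rw [distortion, mul_comm ‖(T : X →L[ℝ] E)‖, mul_assoc]
    exact mul_le_mul_of_nonneg_left ((T : X →L[ℝ] E).le_opNorm x) (norm_nonneg _)

lemma exists_contracting_le_distortion [Nontrivial X] (T : X ≃L[ℝ] E) :
    ∃ S : X →ₗ[ℝ] E, ∀ x, ‖S x‖ ≤ ‖x‖ ∧ ‖x‖ ≤ distortion T * ‖S x‖ := by
  have hT := T.norm_pos
  refine ⟨‖(T : X →L[ℝ] E)‖⁻¹ • (T : X →ₗ[ℝ] E), fun x ↦ ⟨?_, ?_⟩⟩ <;>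
    simp only [LinearMap.smul_apply, norm_smul, norm_inv, norm_norm]
  · exact (inv_mul_le_iff₀ hT).2 ((T : X →L[ℝ] E).le_opNorm x)
  · rw [distortion, mul_comm ‖(T : X →L[ℝ] E)‖, mul_assoc, mul_inv_cancel_left₀ hT.ne']
    exact T.norm_le_norm_symm_mul_norm_apply x

variable [FiniteDimensional ℝ X] [FiniteDimensional ℝ Y]

lemma dBMEuclid_withLp_top_le_sqrt (T₁ : X ≃L[ℝ] E) (T₂ : Y ≃L[ℝ] F) :
    dBMEuclid (WithLp ∞ (X × Y)) ≤ √(distortion T₁ ^ 2 + distortion T₂ ^ 2) := by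
  obtain ⟨S₁, hS₁⟩ := exists_expanding_le_distortion T₁
  obtain ⟨S₂, hS₂⟩ := exists_expanding_le_distortion T₂
  refine (dBMEuclid_le_of_bounds (prodMapL2 ∞ S₁ S₂) (Real.sqrt_nonneg _) zero_le_one
    (fun z ↦ ?_) fun z ↦ ?_).trans_eq (mul_one _)
  · refine le_of_pow_le_pow_left₀ two_ne_zero (by positivity) ?_
    rw [mul_pow, Real.sq_sqrt (by positivity), WithLp.prod_norm_sq_eq_of_L2, prodMapL2_fst,
      prodMapL2_snd]
    have h₁ := pow_le_pow_left₀ (norm_nonneg _) ((hS₁ z.fst).2.trans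
      (mul_le_mul_of_nonneg_left (WithLp.norm_fst_le (x := z)) (distortion_nonneg T₁))) 2
    have h₂ := pow_le_pow_left₀ (norm_nonneg _) ((hS₂ z.snd).2.trans
      (mul_le_mul_of_nonneg_left (WithLp.norm_snd_le (x := z)) (distortion_nonneg T₂))) 2
    nlinarith
  · rw [one_mul, WithLp.prod_norm_eq_sup]
    exact sup_le ((hS₁ z.fst).1.trans (WithLp.norm_fst_le (x := prodMapL2 ∞ S₁ S₂ z)))
      ((hS₂ z.snd).1.trans (WithLp.norm_snd_le (x := prodMapL2 ∞ S₁ S₂ z)))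

lemma dBMEuclid_withLp_one_le_sqrt [Nontrivial X] [Nontrivial Y] (T₁ : X ≃L[ℝ] E)
    (T₂ : Y ≃L[ℝ] F) :
    dBMEuclid (WithLp 1 (X × Y)) ≤ √(distortion T₁ ^ 2 + distortion T₂ ^ 2) := by
  obtain ⟨S₁, hS₁⟩ := exists_contracting_le_distortion T₁
  obtain ⟨S₂, hS₂⟩ := exists_contracting_le_distortion T₂
  refine (dBMEuclid_le_of_bounds (prodMapL2 1 S₁ S₂) zero_le_one (Real.sqrt_nonneg _)
    (fun z ↦ ?_) fun z ↦ ?_).trans_eq (one_mul _)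
  · refine le_of_pow_le_pow_left₀ two_ne_zero (by positivity) ?_
    rw [one_mul, WithLp.prod_norm_sq_eq_of_L2, WithLp.prod_norm_eq_of_L1, prodMapL2_fst,
      prodMapL2_snd]
    nlinarith [(hS₁ z.fst).1, (hS₂ z.snd).1, norm_nonneg (S₁ z.fst), norm_nonneg (S₂ z.snd),
      norm_nonneg z.fst, norm_nonneg z.snd]
  · refine le_of_pow_le_pow_left₀ two_ne_zero (by positivity) ?_
    rw [mul_pow, Real.sq_sqrt (by positivity), WithLp.prod_norm_sq_eq_of_L2,
      WithLp.prod_norm_eq_of_L1, prodMapL2_fst, prodMapL2_snd]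
    have := add_le_add (hS₁ z.fst).2 (hS₂ z.snd).2
    nlinarith [sq_nonneg (distortion T₁ * ‖S₂ z.snd‖ - distortion T₂ * ‖S₁ z.fst‖),
      norm_nonneg z.fst, norm_nonneg z.snd]

end UpperBound

section SumFormula

variable {X Y : Type*} [NormedAddCommGroup X] [NormedSpace ℝ X] [FiniteDimensional ℝ X]
  [NormedAddCommGroup Y] [NormedSpace ℝ Y] [FiniteDimensional ℝ Y]

lemma le_sqrt_dBMEuclid_sq_add {a : ℝ}
    (h : ∀ (T₁ : X ≃L[ℝ] EuclideanSpace ℝ (Fin (finrank ℝ X)))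
      (T₂ : Y ≃L[ℝ] EuclideanSpace ℝ (Fin (finrank ℝ Y))),
      a ≤ √(distortion T₁ ^ 2 + distortion T₂ ^ 2)) :
    a ≤ √(dBMEuclid X ^ 2 + dBMEuclid Y ^ 2) := by
  obtain ⟨T₁, hT₁⟩ := exists_tendsto_distortion_dBM (X := X)
    (F := EuclideanSpace ℝ (Fin (finrank ℝ X)))
  obtain ⟨T₂, hT₂⟩ := exists_tendsto_distortion_dBM (X := Y)
    (F := EuclideanSpace ℝ (Fin (finrank ℝ Y)))
  exact ge_of_tendsto' ((hT₁.pow 2).add (hT₂.pow 2)).sqrt fun n ↦ h (T₁ n) (T₂ n)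

variable [Nontrivial X] [Nontrivial Y]

theorem dBMEuclid_withLp_top :
    dBMEuclid (WithLp ∞ (X × Y)) = √(dBMEuclid X ^ 2 + dBMEuclid Y ^ 2) :=
  le_antisymm (le_sqrt_dBMEuclid_sq_add dBMEuclid_withLp_top_le_sqrt)
    (le_dBM sqrt_dBMEuclid_sq_add_le_distortion_withLp_top)

theorem dBMEuclid_withLp_one :
    dBMEuclid (WithLp 1 (X × Y)) = √(dBMEuclid X ^ 2 + dBMEuclid Y ^ 2) :=
  le_antisymm (le_sqrt_dBMEuclid_sq_add dBMEuclid_withLp_one_le_sqrt)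
    (le_dBM sqrt_dBMEuclid_sq_add_le_distortion_withLp_one)

end SumFormula

lemma finrank_withLp_prod (p : ℝ≥0∞) (X Y : Type*) [AddCommGroup X] [Module ℝ X]
    [AddCommGroup Y] [Module ℝ Y] [Module.Finite ℝ X] [Module.Finite ℝ Y] :
    finrank ℝ (WithLp p (X × Y)) = finrank ℝ X + finrank ℝ Y := by
  rw [(WithLp.linearEquiv p ℝ (X × Y)).finrank_eq, finrank_prod]

theorem IsHanner.finrank_pos {X : Type} [NormedAddCommGroup X] [NormedSpace ℝ X]
    (h : IsHanner X) : 0 < finrank ℝ X := by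
  induction h with
  | segment X h => exact h ▸ one_pos
  | sumOne X Y _ _ ihX ihY =>
    have := Module.finite_of_finrank_pos ihX
    have := Module.finite_of_finrank_pos ihY
    rw [finrank_withLp_prod]
    omega
  | sumTop X Y _ _ ihX ihY =>
    have := Module.finite_of_finrank_pos ihX
    have := Module.finite_of_finrank_pos ihY
    rw [finrank_withLp_prod]
    omega
  | congr X Y _ e ih => exact e.toLinearEquiv.finrank_eq ▸ ih

theorem IsHanner.dBMEuclid_eq {X : Type} [NormedAddCommGroup X] [NormedSpace ℝ X]
    (h : IsHanner X) : dBMEuclid X = √(finrank ℝ X) := by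
  induction h with
  | segment X h => rw [dBMEuclid_of_finrank_eq_one h, h, Nat.cast_one, Real.sqrt_one]
  | sumOne X Y hX hY ihX ihY =>
    have := Module.finite_of_finrank_pos hX.finrank_pos
    have := Module.finite_of_finrank_pos hY.finrank_pos
    have := Module.nontrivial_of_finrank_pos hX.finrank_pos
    have := Module.nontrivial_of_finrank_pos hY.finrank_pos
    rw [dBMEuclid_withLp_one, ihX, ihY, finrank_withLp_prod, Nat.cast_add,
      Real.sq_sqrt (Nat.cast_nonneg _), Real.sq_sqrt (Nat.cast_nonneg _)]
  | sumTop X Y hX hY ihX ihY =>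
    have := Module.finite_of_finrank_pos hX.finrank_pos
    have := Module.finite_of_finrank_pos hY.finrank_pos
    have := Module.nontrivial_of_finrank_pos hX.finrank_pos
    have := Module.nontrivial_of_finrank_pos hY.finrank_pos
    rw [dBMEuclid_withLp_top, ihX, ihY, finrank_withLp_prod, Nat.cast_add,
      Real.sq_sqrt (Nat.cast_nonneg _), Real.sq_sqrt (Nat.cast_nonneg _)]
  | congr X Y _ e ih => rw [← dBMEuclid_congr e, ih, e.toLinearEquiv.finrank_eq]

/-- every Hanner polytope in `ℝⁿ` has Banach–Mazur distance `√n`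
to the Euclidean ball. -/
theorem stmt_12 (n : ℕ) (X : Type) [NormedAddCommGroup X] [NormedSpace ℝ X]
    (hX : IsHanner X) (hn : Module.finrank ℝ X = n) :
    dBM X (EuclideanSpace ℝ (Fin n)) = Real.sqrt n := by
  subst hn
  exact hX.dBMEuclid_eq
end

section
/- Let $X_1, X_2$ be $2$-dimensional real normed spaces and suppose there exists $d \ge 1$ with $d < d_{BM}(X_1, X_2)$ such that $d_{BM}(X_i, \ell_1^2) \le d$ for $i = 1, 2$. Then for every integer $m \ge 2$, $d_{BM}(X_1 \oplus_1 \ell_1^m, X_2 \oplus_1 \ell_1^m) \le d < d_{BM}(X_1, X_2)$. -/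
/-!
Normalise `T₁ : X₁ → ℓ₁²` so that `‖T₁⁻¹‖ ≤ 1`, `‖T₁‖ ≤ t` and `T₂ : X₂ → ℓ₁²` so that
`‖T₂‖ ≤ 1`, `‖T₂⁻¹‖ ≤ t`, for any `t > d`. Splitting `ℓ₁ᵐ = ℓ₁² ⊕₁ ℓ₁ᵐ⁻²`, the map
`(x, y, z) ↦ (T₂⁻¹ y, T₁ x, z)` from `X₁ ⊕₁ ℓ₁² ⊕₁ ℓ₁ᵐ⁻²` to `X₂ ⊕₁ ℓ₁² ⊕₁ ℓ₁ᵐ⁻²` then has norm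
at most `max (‖T₂⁻¹‖, ‖T₁‖, 1) ≤ t` and its inverse has norm at most `max (‖T₂‖, ‖T₁⁻¹‖, 1) = 1`.
-/

open scoped ENNReal

section LpSum

variable {𝕜 E E' F F' : Type*} [NontriviallyNormedField 𝕜]
  [NormedAddCommGroup E] [NormedSpace 𝕜 E] [NormedAddCommGroup F] [NormedSpace 𝕜 F]
  [NormedAddCommGroup E'] [NormedSpace 𝕜 E'] [NormedAddCommGroup F'] [NormedSpace 𝕜 F']
  (p : ℝ≥0∞)

namespace ContinuousLinearEquiv

noncomputable def withLpProdCongr (e : E ≃L[𝕜] E') (f : F ≃L[𝕜] F') :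
    WithLp p (E × F) ≃L[𝕜] WithLp p (E' × F') :=
  (WithLp.prodContinuousLinearEquiv p 𝕜 E F).trans
    ((e.prodCongr f).trans (WithLp.prodContinuousLinearEquiv p 𝕜 E' F').symm)

@[simp]
theorem withLpProdCongr_apply (e : E ≃L[𝕜] E') (f : F ≃L[𝕜] F') (x : WithLp p (E × F)) :
    e.withLpProdCongr p f x = WithLp.toLp p (e x.fst, f x.snd) := rfl

theorem norm_withLpProdCongr_one_le (e : E ≃L[𝕜] E') (f : F ≃L[𝕜] F') :
    ‖(e.withLpProdCongr 1 f : WithLp 1 (E × F) →L[𝕜] WithLp 1 (E' × F'))‖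
      ≤ max ‖(e : E →L[𝕜] E')‖ ‖(f : F →L[𝕜] F')‖ := by
  refine ContinuousLinearMap.opNorm_le_bound _ (le_max_of_le_left (norm_nonneg _)) fun x => ?_
  change ‖e.withLpProdCongr 1 f x‖ ≤ _
  rw [withLpProdCongr_apply, WithLp.prod_norm_eq_of_L1, WithLp.prod_norm_eq_of_L1, mul_add]
  exact add_le_add ((e : E →L[𝕜] E').le_of_opNorm_le (le_max_left _ _) _)
    ((f : F →L[𝕜] F').le_of_opNorm_le (le_max_right _ _) _)

theorem norm_withLpProdCongr_one_refl_le (e : E ≃L[𝕜] E') :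
    ‖(e.withLpProdCongr 1 (ContinuousLinearEquiv.refl 𝕜 F) :
        WithLp 1 (E × F) →L[𝕜] WithLp 1 (E' × F))‖
      ≤ max ‖(e : E →L[𝕜] E')‖ 1 :=
  (e.norm_withLpProdCongr_one_le _).trans (max_le_max le_rfl ContinuousLinearMap.norm_id_le)

end ContinuousLinearEquiv

end LpSum

section Isometries

variable (p : ℝ≥0∞) [Fact (1 ≤ p)] (𝕜 : Type*) [Semiring 𝕜]

noncomputable def LinearIsometryEquiv.withLpProdLeftComm (α β γ : Type*)
    [SeminormedAddCommGroup α] [Module 𝕜 α] [SeminormedAddCommGroup β] [Module 𝕜 β]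
    [SeminormedAddCommGroup γ] [Module 𝕜 γ] :
    WithLp p (α × WithLp p (β × γ)) ≃ₗᵢ[𝕜] WithLp p (β × WithLp p (α × γ)) :=
  (withLpProdAssoc p 𝕜 α β γ).symm.trans
    (((withLpProdComm p 𝕜 α β).withLpProdCongr p (refl 𝕜 γ)).trans (withLpProdAssoc p 𝕜 β α γ))

noncomputable def PiLp.finAddEquivProd (E : Type*) [SeminormedAddCommGroup E] [Module 𝕜 E]
    (n k : ℕ) :
    PiLp p (fun _ : Fin (n + k) => E)
      ≃ₗᵢ[𝕜] WithLp p (PiLp p (fun _ : Fin n => E) × PiLp p (fun _ : Fin k => E)) :=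
  (LinearIsometryEquiv.piLpCongrLeft p 𝕜 E finSumFinEquiv.symm).trans
    (PiLp.sumPiLpEquivProdLpPiLp p _)

end Isometries

section BanachMazur

variable {E F E' F' : Type*} [NormedAddCommGroup E] [NormedSpace ℝ E]
  [NormedAddCommGroup F] [NormedSpace ℝ F] [NormedAddCommGroup E'] [NormedSpace ℝ E']
  [NormedAddCommGroup F'] [NormedSpace ℝ F']

theorem dBM_le_norm_mul_norm_symm (T : E ≃L[ℝ] F) :
    dBM E F ≤ ‖(T : E →L[ℝ] F)‖ * ‖(T.symm : F →L[ℝ] E)‖ :=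
  csInf_le ⟨0, by rintro c ⟨S, rfl⟩; positivity⟩ ⟨T, rfl⟩

namespace ContinuousLinearEquiv

theorem norm_linearIsometryEquiv_trans_trans (e : E' ≃ₗᵢ[ℝ] E) (T : E ≃L[ℝ] F)
    (f : F ≃ₗᵢ[ℝ] F') :
    ‖(((e : E' ≃L[ℝ] E).trans (T.trans (f : F ≃L[ℝ] F'))) : E' →L[ℝ] F')‖
      = ‖(T : E →L[ℝ] F)‖ := by
  rw [← comp_coe, ← comp_coe, ContinuousLinearMap.opNorm_comp_linearIsometryEquiv,
    ContinuousLinearMap.opNorm_linearIsometryEquiv_comp]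

theorem exists_norm_mul_norm_symm_eq_of_linearIsometryEquiv (e : E' ≃ₗᵢ[ℝ] E) (T : E ≃L[ℝ] F)
    (f : F ≃ₗᵢ[ℝ] F') : ∃ S : E' ≃L[ℝ] F',
      ‖(T : E →L[ℝ] F)‖ * ‖(T.symm : F →L[ℝ] E)‖
        = ‖(S : E' →L[ℝ] F')‖ * ‖(S.symm : F' →L[ℝ] E')‖ :=
  ⟨(e : E' ≃L[ℝ] E).trans (T.trans (f : F ≃L[ℝ] F')), by
    rw [T.norm_linearIsometryEquiv_trans_trans,
      ← T.symm.norm_linearIsometryEquiv_trans_trans f.symm e.symm]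
    rfl⟩

theorem exists_norm_le_of_norm_mul_norm_symm_le [Nontrivial E] (T : E ≃L[ℝ] F) {a b : ℝ}
    (hb : 0 < b) (h : ‖(T : E →L[ℝ] F)‖ * ‖(T.symm : F →L[ℝ] E)‖ ≤ a * b) :
    ∃ S : E ≃L[ℝ] F, ‖(S : E →L[ℝ] F)‖ ≤ a ∧ ‖(S.symm : F →L[ℝ] E)‖ ≤ b := by
  have hc : 0 < ‖(T.symm : F →L[ℝ] E)‖ / b := div_pos T.norm_symm_pos hb
  refine ⟨Units.mk0 _ hc.ne' • T, ?_, ?_⟩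
  · change ‖(‖(T.symm : F →L[ℝ] E)‖ / b) • (T : E →L[ℝ] F)‖ ≤ a
    rw [norm_smul, Real.norm_of_nonneg hc.le, div_mul_eq_mul_div, mul_comm, div_le_iff₀ hb]
    exact h
  · change ‖(‖(T.symm : F →L[ℝ] E)‖ / b)⁻¹ • (T.symm : F →L[ℝ] E)‖ ≤ b
    rw [norm_smul, Real.norm_of_nonneg (inv_nonneg.mpr hc.le), inv_div,
      div_mul_cancel₀ _ T.norm_symm_pos.ne']

end ContinuousLinearEquiv

theorem dBM_congr (e : E ≃ₗᵢ[ℝ] E') (f : F ≃ₗᵢ[ℝ] F') : dBM E F = dBM E' F' := by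
  unfold dBM
  congr 1
  ext c
  constructor
  · rintro ⟨T, rfl⟩
    exact T.exists_norm_mul_norm_symm_eq_of_linearIsometryEquiv e.symm f
  · rintro ⟨T, rfl⟩
    exact T.exists_norm_mul_norm_symm_eq_of_linearIsometryEquiv e f.symm

theorem exists_norm_le_of_dBM_lt [Nontrivial E] (hne : Nonempty (E ≃L[ℝ] F)) {a b : ℝ}
    (hb : 0 < b) (h : dBM E F < a * b) :
    ∃ S : E ≃L[ℝ] F, ‖(S : E →L[ℝ] F)‖ ≤ a ∧ ‖(S.symm : F →L[ℝ] E)‖ ≤ b := by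
  obtain ⟨T₀⟩ := hne
  obtain ⟨_, ⟨T, rfl⟩, hT⟩ := exists_lt_of_csInf_lt (by exact ⟨_, T₀, rfl⟩) h
  exact T.exists_norm_le_of_norm_mul_norm_symm_le hb hT.le

theorem exists_norm_le_of_dBM_piLp_lt {n : ℕ} (h : Module.finrank ℝ E = n + 1) {a b : ℝ}
    (hb : 0 < b) (hlt : dBM E (PiLp 1 fun _ : Fin (n + 1) => ℝ) < a * b) :
    ∃ S : E ≃L[ℝ] PiLp 1 (fun _ : Fin (n + 1) => ℝ),
      ‖(S : E →L[ℝ] PiLp 1 (fun _ : Fin (n + 1) => ℝ))‖ ≤ a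
        ∧ ‖(S.symm : PiLp 1 (fun _ : Fin (n + 1) => ℝ) →L[ℝ] E)‖ ≤ b := by
  have : FiniteDimensional ℝ E := .of_finrank_eq_succ h
  have : Nontrivial E := Module.nontrivial_of_finrank_pos (R := ℝ) (by omega)
  refine exists_norm_le_of_dBM_lt
    (FiniteDimensional.nonempty_continuousLinearEquiv_of_finrank_eq ?_) hb hlt
  rw [h, (WithLp.linearEquiv 1 ℝ _).finrank_eq, Module.finrank_fin_fun]

/-- Witnessed by `(x, y, z) ↦ (T₂⁻¹ y, T₁ x, z)`. -/
theorem dBM_withLpProd_le {X₁ X₂ Y Z : Type*} [NormedAddCommGroup X₁] [NormedSpace ℝ X₁]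
    [NormedAddCommGroup X₂] [NormedSpace ℝ X₂] [NormedAddCommGroup Y] [NormedSpace ℝ Y]
    [NormedAddCommGroup Z] [NormedSpace ℝ Z] (T₁ : X₁ ≃L[ℝ] Y) (T₂ : X₂ ≃L[ℝ] Y) :
    dBM (WithLp 1 (X₁ × WithLp 1 (Y × Z))) (WithLp 1 (X₂ × WithLp 1 (Y × Z)))
      ≤ max ‖(T₂.symm : Y →L[ℝ] X₂)‖ (max ‖(T₁ : X₁ →L[ℝ] Y)‖ 1)
        * max ‖(T₂ : X₂ →L[ℝ] Y)‖ (max ‖(T₁.symm : Y →L[ℝ] X₁)‖ 1) := by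
  rw [dBM_congr (LinearIsometryEquiv.withLpProdLeftComm 1 ℝ X₁ Y Z)
    (LinearIsometryEquiv.refl ℝ _)]
  have hD := (T₂.symm.norm_withLpProdCongr_one_le _).trans
    (max_le_max le_rfl (T₁.norm_withLpProdCongr_one_refl_le (F := Z)))
  have hD' := (T₂.norm_withLpProdCongr_one_le _).trans
    (max_le_max le_rfl (T₁.symm.norm_withLpProdCongr_one_refl_le (F := Z)))
  exact (dBM_le_norm_mul_norm_symm _).trans (mul_le_mul hD hD' (norm_nonneg _) (by positivity))

end BanachMazur

theorem stmt_17_general (X₁ X₂ : Type)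
    [NormedAddCommGroup X₁] [NormedSpace ℝ X₁] [NormedAddCommGroup X₂] [NormedSpace ℝ X₂]
    (h₁ : Module.finrank ℝ X₁ = 2) (h₂ : Module.finrank ℝ X₂ = 2)
    (d : ℝ) (hd : 1 ≤ d)
    (hd₁ : dBM X₁ (PiLp 1 fun _ : Fin 2 => ℝ) ≤ d)
    (hd₂ : dBM X₂ (PiLp 1 fun _ : Fin 2 => ℝ) ≤ d)
    (m : ℕ) (hm : 2 ≤ m) :
    dBM (WithLp 1 (X₁ × PiLp 1 fun _ : Fin m => ℝ))
        (WithLp 1 (X₂ × PiLp 1 fun _ : Fin m => ℝ)) ≤ d := by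
  obtain ⟨k, rfl⟩ := Nat.exists_eq_add_of_le hm
  refine le_of_forall_gt_imp_ge_of_dense fun t ht => ?_
  obtain ⟨T₁, hT₁, hT₁'⟩ := exists_norm_le_of_dBM_piLp_lt h₁ one_pos
    (hd₁.trans_lt (by rwa [mul_one]) : _ < t * 1)
  obtain ⟨T₂, hT₂, hT₂'⟩ := exists_norm_le_of_dBM_piLp_lt h₂ (by linarith)
    (hd₂.trans_lt (by rwa [one_mul]) : _ < 1 * t)
  let split (X : Type) [NormedAddCommGroup X] [NormedSpace ℝ X] :=
    (LinearIsometryEquiv.refl ℝ X).withLpProdCongr 1 (PiLp.finAddEquivProd 1 ℝ ℝ 2 k)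
  rw [dBM_congr (split X₁) (split X₂)]
  calc _ ≤ _ := dBM_withLpProd_le T₁ T₂
    _ ≤ t * 1 := mul_le_mul (max_le hT₂' (max_le hT₁ (by linarith)))
        (max_le hT₂ (max_le hT₁' le_rfl)) (by positivity) (by linarith)
    _ = t := mul_one t

/-- if both `X₁, X₂` are within distance `d < d_BM(X₁,X₂)` of `ℓ₁²`,
then for `m ≥ 2` the distance between the `ℓ₁`-sums with `ℓ₁ᵐ` is at most `d`. -/
theorem stmt_17 (X₁ X₂ : Type)
    [NormedAddCommGroup X₁] [NormedSpace ℝ X₁] [NormedAddCommGroup X₂] [NormedSpace ℝ X₂]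
    (h₁ : Module.finrank ℝ X₁ = 2) (h₂ : Module.finrank ℝ X₂ = 2)
    (d : ℝ) (hd : 1 ≤ d) (hlt : d < dBM X₁ X₂)
    (hd₁ : dBM X₁ (PiLp 1 fun _ : Fin 2 => ℝ) ≤ d)
    (hd₂ : dBM X₂ (PiLp 1 fun _ : Fin 2 => ℝ) ≤ d)
    (m : ℕ) (hm : 2 ≤ m) :
    dBM (WithLp 1 (X₁ × PiLp 1 fun _ : Fin m => ℝ))
        (WithLp 1 (X₂ × PiLp 1 fun _ : Fin m => ℝ)) ≤ d :=
  stmt_17_general X₁ X₂ h₁ h₂ d hd hd₁ hd₂ m hm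
end

section
/- Let $y \in \mathbb{R}^2$ be such that $0$ lies in the triangle $T$ with vertices $y - e^1$, $y + e^1$, $y + e^2$, let $d \in [1, 3/2]$, and let $S$ be a triangle with $T \subseteq S \subseteq dT$ whose vertices $v, v', v''$ satisfy $v \in [d(y - e^1), dy]$ and $v_2' \ge v_2''$. Then $v_1' \in [y_1 - 1, y_1 + 1]$, $v_1'' \ge y_1 + 1$, $v_1 \le y_1 - 1$, and $v_2' \ge y_2 + 1$. -/
set_option maxHeartbeats 1000000

open scoped Pointwise

private lemma stmt19_mem_hull3 {E : Type*} [AddCommGroup E] [Module ℝ E] {x v v' v'' : E}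
    (h : x ∈ convexHull ℝ {v, v', v''}) :
    ∃ α β γ : ℝ, 0 ≤ α ∧ 0 ≤ β ∧ 0 ≤ γ ∧ α + β + γ = 1 ∧
      α • v + β • v' + γ • v'' = x := by
  rw [convexHull_insert (by exact ⟨v', by simp⟩), mem_convexJoin] at h
  obtain ⟨p, hp, z, hz, hx⟩ := h
  rw [Set.mem_singleton_iff] at hp
  subst hp
  rw [convexHull_pair] at hz
  obtain ⟨a, b, ha, hb, hab, hz⟩ := hz
  obtain ⟨c, e, hc, he, hce, hx⟩ := hx
  refine ⟨c, e * a, e * b, hc, mul_nonneg he ha, mul_nonneg he hb, by nlinarith, ?_⟩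
  rw [← hx, ← hz, smul_add, smul_smul, smul_smul, add_assoc]

private lemma stmt19_T_facts (y x : Fin 2 → ℝ)
    (hx : x ∈ convexHull ℝ {y - (Pi.single 0 1 : Fin 2 → ℝ),
      y + (Pi.single 0 1 : Fin 2 → ℝ), y + (Pi.single 1 1 : Fin 2 → ℝ)}) :
    y 1 ≤ x 1 ∧ x 0 + x 1 ≤ y 0 + y 1 + 1 ∧ x 1 - x 0 ≤ y 1 - y 0 + 1 := by
  obtain ⟨α, β, γ, hα, hβ, hγ, hsum, hcomb⟩ := stmt19_mem_hull3 hx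
  have h0 := congrFun hcomb 0
  have h1 := congrFun hcomb 1
  simp [Pi.single_eq_same, Pi.single_eq_of_ne (show (1:Fin 2) ≠ 0 by decide),
    Pi.single_eq_of_ne (show (0:Fin 2) ≠ 1 by decide)] at h0 h1
  have e0 : (α+β+γ) * y 0 = y 0 := by rw [hsum, one_mul]
  have e1 : (α+β+γ) * y 1 = y 1 := by rw [hsum, one_mul]
  refine ⟨by nlinarith, by nlinarith, by nlinarith⟩

private lemma stmt19_G4 (Y0 Y1 d P1 Q1 ca cb cc : ℝ)
    (hc1 : ca*(d*Y1) + cb*P1 + cc*Q1 = Y1+1) (hvv : Q1 ≤ P1)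
    (hca : 0 ≤ ca) (hcb : 0 ≤ cb) (hcc : 0 ≤ cc) (hsum : ca+cb+cc = 1)
    (hd1 : 1 ≤ d) (hd2 : d ≤ 3/2) (hy1 : Y1 ≤ 0) (hyA : -(Y1+1) ≤ Y0) (hyB : Y0 ≤ Y1+1)
    (hP1 : d*Y1 ≤ P1) : Y1 + 1 ≤ P1 := by
  by_contra h
  push_neg at h
  have hY1m : -1 ≤ Y1 := by linarith
  have hP1lb : (0:ℝ) ≤ 5/2 - (Y1+1-P1) := by
    nlinarith [mul_nonneg (by linarith : (0:ℝ) ≤ 3/2 - d) (by linarith : (0:ℝ) ≤ -Y1)]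
  nlinarith [mul_nonneg hca (by nlinarith : (0:ℝ) ≤ Y1 - d*Y1),
    mul_nonneg hcc (by linarith : (0:ℝ) ≤ P1 - Q1),
    mul_nonneg hca hP1lb,
    mul_nonneg (by linarith : (0:ℝ) ≤ 1 - ca) (by linarith : (0:ℝ) ≤ Y1+1-P1)]

private lemma stmt19_G3u (Y0 Y1 d P0 P1 : ℝ)
    (hd1 : 1 ≤ d) (hd2 : d ≤ 3/2) (hy1 : Y1 ≤ 0) (hyB : Y0 ≤ Y1+1)
    (hP2 : P0 + P1 ≤ d*(Y0+Y1+1)) (G4 : Y1+1 ≤ P1) : P0 ≤ Y0 + 1 := by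
  nlinarith [mul_nonneg (by linarith : (0:ℝ) ≤ d-1) (by linarith : (0:ℝ) ≤ Y1+1-Y0),
    mul_nonneg (by linarith : (0:ℝ) ≤ 3/2-d) (by linarith : (0:ℝ) ≤ -Y1)]

private lemma stmt19_G3l (Y0 Y1 d P0 P1 : ℝ)
    (hd1 : 1 ≤ d) (hd2 : d ≤ 3/2) (hy1 : Y1 ≤ 0) (hyA : -(Y1+1) ≤ Y0)
    (hP3 : P1 - P0 ≤ d*(Y1-Y0+1)) (G4 : Y1+1 ≤ P1) : Y0 - 1 ≤ P0 := by
  nlinarith [mul_nonneg (by linarith : (0:ℝ) ≤ d-1) (by linarith : (0:ℝ) ≤ Y0-Y1+1),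
    mul_nonneg (by linarith : (0:ℝ) ≤ 3/2-d) (by linarith : (0:ℝ) ≤ -Y1)]

private lemma stmt19_G2 (Y0 Y1 d P0 P1 Q0 Q1 ta ba bb bc : ℝ)
    (hd1 : 1 ≤ d) (hd2 : d ≤ 3/2) (hy1 : Y1 ≤ 0) (hyA : -(Y1+1) ≤ Y0) (hyB : Y0 ≤ Y1+1)
    (hta : 0 ≤ ta)
    (hP2 : P0 + P1 ≤ d*(Y0+Y1+1)) (hQ1 : d*Y1 ≤ Q1)
    (hb0 : ba*(d*Y0 - ta*d) + bb*P0 + bc*Q0 = Y0+1) (hb1 : ba*(d*Y1) + bb*P1 + bc*Q1 = Y1)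
    (hba : 0 ≤ ba) (hbb : 0 ≤ bb) (hbc : 0 ≤ bc) (hbsum : ba+bb+bc = 1)
    (G4 : Y1+1 ≤ P1) : Y0 + 1 ≤ Q0 := by
  by_contra hQ
  push_neg at hQ
  have hsum1 : ba*(d*Y1) + bb*(d*Y1) + bc*(d*Y1) = d*Y1 := by linear_combination (d*Y1)*hbsum
  have B : bb*(1-(d-1)*Y1) ≤ -(d-1)*Y1 := by
    nlinarith [mul_nonneg hbb (by linarith : (0:ℝ) ≤ P1 - (Y1+1)),
      mul_nonneg hbc (by linarith : (0:ℝ) ≤ Q1 - d*Y1)]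
  have hsum0 : ba*(d*Y0) + bb*(d*Y0) + bc*(d*Y0) = d*Y0 := by linear_combination (d*Y0)*hbsum
  have F3 : (ba+bb)*(1 - (d-1)*Y0) ≤ bb*((d-1)*(Y1+1)) := by
    nlinarith [mul_nonneg hba (mul_nonneg hta (by linarith : (0:ℝ) ≤ d)),
      mul_nonneg hbb (by linarith : (0:ℝ) ≤ d*(Y0+Y1+1) - (Y1+1) - P0),
      mul_nonneg hbc (by linarith : (0:ℝ) ≤ Y0+1-Q0)]
  rcases eq_or_lt_of_le (by positivity : (0:ℝ) ≤ ba + bb) with hs | hs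
  · have hba0 : ba = 0 := by linarith
    have hbb0 : bb = 0 := by linarith
    have hbc1 : bc = 1 := by linarith
    have : Q0 = Y0 + 1 := by
      linear_combination hb0 - (d*Y0 - ta*d)*hba0 - P0*hbb0 - Q0*hbc1
    linarith
  · have hdY : (0:ℝ) ≤ (d-1)*(Y1+1) := mul_nonneg (by linarith) (by linarith)
    have hKle : (ba+bb)*(1-(d-1)*(Y0+Y1+1)) ≤ 0 := by
      nlinarith [F3, mul_nonneg hba hdY]
    have hK0 : 1 ≤ (d-1)*(Y0+Y1+1) := by nlinarith [hKle, hs]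
    have hY10 : Y1 = 0 := by
      have : 0 ≤ Y1 := by
        nlinarith [mul_nonneg (by linarith : (0:ℝ) ≤ 3/2-d) (by linarith : (0:ℝ) ≤ Y0+Y1+1)]
      linarith
    subst hY10
    have hbb0 : bb = 0 := by nlinarith [B]
    subst hbb0
    have hpos : 0 < 1 - (d-1)*Y0 := by
      rcases le_or_gt 0 Y0 with h0 | h0
      · nlinarith [mul_nonneg (by linarith : (0:ℝ) ≤ 3/2-d) h0]
      · nlinarith [mul_nonneg (by linarith : (0:ℝ) ≤ d-1) (by linarith : (0:ℝ) ≤ -Y0)]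
    nlinarith [mul_pos (by linarith : 0 < ba) hpos, F3]

private lemma stmt19_G1 (Y0 Y1 d P0 P1 Q0 Q1 ta aa ab ac : ℝ)
    (hd1 : 1 ≤ d) (hd2 : d ≤ 3/2) (hy1 : Y1 ≤ 0) (hyA : -(Y1+1) ≤ Y0) (hyB : Y0 ≤ Y1+1)
    (hP3 : P1 - P0 ≤ d*(Y1-Y0+1)) (hQ1 : d*Y1 ≤ Q1)
    (ha0 : aa*(d*Y0 - ta*d) + ab*P0 + ac*Q0 = Y0-1) (ha1 : aa*(d*Y1) + ab*P1 + ac*Q1 = Y1)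
    (haa : 0 ≤ aa) (hab : 0 ≤ ab) (hac : 0 ≤ ac) (hasum : aa+ab+ac = 1)
    (G4 : Y1+1 ≤ P1) (G2 : Y0+1 ≤ Q0) : d*Y0 - ta*d ≤ Y0 - 1 := by
  by_contra h
  push_neg at h
  have hsum1 : aa*(d*Y1) + ab*(d*Y1) + ac*(d*Y1) = d*Y1 := by linear_combination (d*Y1)*hasum
  have B : ab*(1-(d-1)*Y1) ≤ -(d-1)*Y1 := by
    nlinarith [mul_nonneg hab (by linarith : (0:ℝ) ≤ P1 - (Y1+1)),
      mul_nonneg hac (by linarith : (0:ℝ) ≤ Q1 - d*Y1)]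
  have hsum0 : aa*Y0 + ab*Y0 + ac*Y0 = Y0 := by linear_combination Y0*hasum
  have hr1 : (d-1)*(Y1+1-Y0) ≤ 1 := by
    nlinarith [mul_nonneg (by linarith : (0:ℝ) ≤ d-1) (by linarith : (0:ℝ) ≤ Y1+1+Y0),
      mul_nonneg (by linarith : (0:ℝ) ≤ 3/2-d) (by linarith : (0:ℝ) ≤ -Y1)]
  have hMain : ab + 2*ac + aa*((d*Y0 - ta*d) - (Y0-1)) ≤ ab*((d-1)*(Y1+1-Y0)) := by
    nlinarith [mul_nonneg hab (by linarith : (0:ℝ) ≤ P0 - ((Y1+1) - d*(Y1-Y0+1))),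
      mul_nonneg hac (by linarith : (0:ℝ) ≤ Q0 - (Y0+1))]
  have habr : ab*((d-1)*(Y1+1-Y0)) ≤ ab := by
    nlinarith [mul_nonneg hab (by linarith : (0:ℝ) ≤ 1 - (d-1)*(Y1+1-Y0))]
  have haa0 : aa = 0 := by
    rcases eq_or_lt_of_le haa with h' | h'
    · exact h'.symm
    · exfalso
      nlinarith [mul_pos h' (show 0 < d*Y0 - ta*d - (Y0-1) by linarith)]
  subst haa0
  have hac0 : ac = 0 := by nlinarith
  subst hac0
  have hab1 : ab = 1 := by linarith
  subst hab1
  have hY10 : Y1 = 0 := by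
    have : 0 ≤ Y1 := by
      nlinarith [mul_nonneg (by linarith : (0:ℝ) ≤ 3/2-d) (by linarith : (0:ℝ) ≤ Y1+1-Y0)]
    linarith
  subst hY10
  nlinarith [B]

/-- coordinate estimates for the vertices of a triangle `S` with
`T ⊆ S ⊆ dT`, where `T` has vertices `y - e¹, y + e¹, y + e²` and contains `0`,
`d ∈ [1, 3/2]`, `v ∈ [d(y-e¹), dy]`, and `v'₂ ≥ v''₂`. -/
theorem stmt_19 (y v v' v'' : Fin 2 → ℝ) (d : ℝ) (hd : d ∈ Set.Icc (1 : ℝ) (3 / 2))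
    (T S : Set (Fin 2 → ℝ))
    (hT : T = convexHull ℝ {y - (Pi.single 0 1 : Fin 2 → ℝ),
      y + (Pi.single 0 1 : Fin 2 → ℝ), y + (Pi.single 1 1 : Fin 2 → ℝ)})
    (h0T : (0 : Fin 2 → ℝ) ∈ T)
    (hS : S = convexHull ℝ {v, v', v''})
    (hSaff : AffineIndependent ℝ ![v, v', v''])
    (hTS : T ⊆ S) (hSdT : S ⊆ d • T)
    (hv : v ∈ segment ℝ (d • (y - (Pi.single 0 1 : Fin 2 → ℝ))) (d • y))
    (hvv : v'' 1 ≤ v' 1) :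
    (y 0 - 1 ≤ v' 0 ∧ v' 0 ≤ y 0 + 1) ∧ y 0 + 1 ≤ v'' 0 ∧ v 0 ≤ y 0 - 1 ∧
      y 1 + 1 ≤ v' 1 := by
  obtain ⟨hd1, hd2⟩ := hd
  have hdpos : (0:ℝ) < d := by linarith
  -- facts about y from 0 ∈ T
  rw [hT] at h0T
  obtain ⟨hy1, hy2, hy3⟩ := stmt19_T_facts y 0 h0T
  simp only [Pi.zero_apply] at hy1 hy2 hy3
  have hyA : -(y 1 + 1) ≤ y 0 := by linarith
  have hyB : y 0 ≤ y 1 + 1 := by linarith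
  -- v coordinates
  obtain ⟨ta, tb, hta, htb, htab, hveq⟩ := hv
  have hv0 : v 0 = d * y 0 - ta * d := by
    have := congrFun hveq 0
    simp [Pi.single_eq_same] at this
    linear_combination -this + d * y 0 * htab
  have hv1 : v 1 = d * y 1 := by
    have := congrFun hveq 1
    simp [Pi.single_eq_of_ne (show (1:Fin 2) ≠ 0 by decide)] at this
    linear_combination -this + d * y 1 * htab
  -- v' and v'' in d • T
  have hv'dT : v' ∈ d • T := hSdT (by rw [hS]; exact subset_convexHull ℝ _ (by simp))
  have hv''dT : v'' ∈ d • T := hSdT (by rw [hS]; exact subset_convexHull ℝ _ (by simp))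
  rw [Set.mem_smul_set] at hv'dT hv''dT
  obtain ⟨w', hw'T, hw'⟩ := hv'dT
  obtain ⟨w'', hw''T, hw''⟩ := hv''dT
  rw [hT] at hw'T hw''T
  obtain ⟨hP1', hP2', hP3'⟩ := stmt19_T_facts y w' hw'T
  obtain ⟨hQ1', hQ2', hQ3'⟩ := stmt19_T_facts y w'' hw''T
  have hw'0 : v' 0 = d * w' 0 := (congrFun hw' 0).symm
  have hw'1 : v' 1 = d * w' 1 := (congrFun hw' 1).symm
  have hw''0 : v'' 0 = d * w'' 0 := (congrFun hw'' 0).symm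
  have hw''1 : v'' 1 = d * w'' 1 := (congrFun hw'' 1).symm
  have hP1 : d * y 1 ≤ v' 1 := by rw [hw'1]; nlinarith
  have hP2 : v' 0 + v' 1 ≤ d * (y 0 + y 1 + 1) := by rw [hw'0, hw'1]; nlinarith
  have hP3 : v' 1 - v' 0 ≤ d * (y 1 - y 0 + 1) := by rw [hw'0, hw'1]; nlinarith
  have hQ1 : d * y 1 ≤ v'' 1 := by rw [hw''1]; nlinarith
  have hQ2 : v'' 0 + v'' 1 ≤ d * (y 0 + y 1 + 1) := by rw [hw''0, hw''1]; nlinarith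
  have hQ3 : v'' 1 - v'' 0 ≤ d * (y 1 - y 0 + 1) := by rw [hw''0, hw''1]; nlinarith
  -- vertices of T in S, decomposed
  have haS : y - (Pi.single 0 1 : Fin 2 → ℝ) ∈ convexHull ℝ {v, v', v''} := by
    rw [← hS]; exact hTS (by rw [hT]; exact subset_convexHull ℝ _ (by simp))
  have hbS : y + (Pi.single 0 1 : Fin 2 → ℝ) ∈ convexHull ℝ {v, v', v''} := by
    rw [← hS]; exact hTS (by rw [hT]; exact subset_convexHull ℝ _ (by simp))
  have hcS : y + (Pi.single 1 1 : Fin 2 → ℝ) ∈ convexHull ℝ {v, v', v''} := by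
    rw [← hS]; exact hTS (by rw [hT]; exact subset_convexHull ℝ _ (by simp))
  obtain ⟨aa, ab, ac, haa, hab, hac, hasum, hacomb⟩ := stmt19_mem_hull3 haS
  obtain ⟨ba, bb, bc, hba, hbb, hbc, hbsum, hbcomb⟩ := stmt19_mem_hull3 hbS
  obtain ⟨ca, cb, cc, hca, hcb, hcc, hcsum, hccomb⟩ := stmt19_mem_hull3 hcS
  have ha0 : aa * v 0 + ab * v' 0 + ac * v'' 0 = y 0 - 1 := by
    have := congrFun hacomb 0; simpa [Pi.single_eq_same] using this
  have ha1 : aa * v 1 + ab * v' 1 + ac * v'' 1 = y 1 := by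
    have := congrFun hacomb 1
    simpa [Pi.single_eq_of_ne (show (1:Fin 2) ≠ 0 by decide)] using this
  have hb0 : ba * v 0 + bb * v' 0 + bc * v'' 0 = y 0 + 1 := by
    have := congrFun hbcomb 0; simpa [Pi.single_eq_same] using this
  have hb1 : ba * v 1 + bb * v' 1 + bc * v'' 1 = y 1 := by
    have := congrFun hbcomb 1
    simpa [Pi.single_eq_of_ne (show (1:Fin 2) ≠ 0 by decide)] using this
  have hc0 : ca * v 0 + cb * v' 0 + cc * v'' 0 = y 0 := by
    have := congrFun hccomb 0
    simpa [Pi.single_eq_of_ne (show (0:Fin 2) ≠ 1 by decide)] using this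
  have hc1 : ca * v 1 + cb * v' 1 + cc * v'' 1 = y 1 + 1 := by
    have := congrFun hccomb 1; simpa [Pi.single_eq_same] using this
  rw [hv0] at ha0 hb0 hc0
  rw [hv1] at ha1 hb1 hc1
  have G4 : y 1 + 1 ≤ v' 1 := by
    refine stmt19_G4 (y 0) (y 1) d (v' 1) (v'' 1) ca cb cc ?_ hvv hca hcb hcc hcsum
      hd1 hd2 hy1 hyA hyB hP1
    linear_combination hc1
  have G3u : v' 0 ≤ y 0 + 1 := stmt19_G3u (y 0) (y 1) d (v' 0) (v' 1) hd1 hd2 hy1 hyB hP2 G4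
  have G3l : y 0 - 1 ≤ v' 0 := stmt19_G3l (y 0) (y 1) d (v' 0) (v' 1) hd1 hd2 hy1 hyA hP3 G4
  have G2 : y 0 + 1 ≤ v'' 0 :=
    stmt19_G2 (y 0) (y 1) d (v' 0) (v' 1) (v'' 0) (v'' 1) ta ba bb bc hd1 hd2 hy1 hyA hyB
      hta hP2 hQ1 hb0 hb1 hba hbb hbc hbsum G4
  have G1 : v 0 ≤ y 0 - 1 := by
    rw [hv0]
    exact stmt19_G1 (y 0) (y 1) d (v' 0) (v' 1) (v'' 0) (v'' 1) ta aa ab ac hd1 hd2 hy1 hyA hyB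
      hP3 hQ1 ha0 ha1 haa hab hac hasum G4 G2
  exact ⟨⟨G3l, G3u⟩, G2, G1, G4⟩
end
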